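/- Let R and S be Noetherian commutative rings of prime characteristic p such that, for every e ∈ ℕ, R (resp. S) is finitely generated and flat as a module over itself via the e-th iterate of the Frobenius endomorphism (i.e., R and S are F-finite and regular). Let I ⊆ R and J ⊆ S be ideals with I not contained in the nilradical of R and J not contained in the nilradical of S. Let Q = R ⊗_{𝔽_p} S and let 𝔅 be the ideal of Q generated by {f ⊗ g : f ∈ I, g ∈ J}. Then the set of Bernstein–Sato roots of 𝔅 equals the union of the set of Bernstein–Sato roots of I and the set of Bernstein–Sato roots of J. -/

import Mathlib

open Filter TensorProduct

/-- Any commutative ring of characteristic `p` is a `ZMod p`-algebra. -/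
noncomputable instance charPAlgebra (p : ℕ) (R : Type*) [CommRing R] [CharP R p] :
    Algebra (ZMod p) R := ZMod.algebra R p

/-- `D^{(e)}_R · I`: the ideal generated by `{φ(g) : φ ∈ End_{R^{p^e}}(R), g ∈ I}`,
where `End_{R^{p^e}}(R)` is the set of additive endomorphisms of `R` linear over the
subring of `p^e`-th powers. -/
def diffIdeal (p e : ℕ) {R : Type*} [CommRing R] (I : Ideal R) : Ideal R :=
  Ideal.span {y : R | ∃ φ : R →+ R,
    (∀ r x : R, φ (r ^ p ^ e * x) = r ^ p ^ e * φ x) ∧ ∃ g ∈ I, φ g = y}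

/-- `n` belongs to the set of different jumps of level `e` for `I`:
`D^{(e)}_R·Iⁿ ⊋ D^{(e)}_R·I^{n+1}`. -/
def IsJump (p e : ℕ) {R : Type*} [CommRing R] (I : Ideal R) (n : ℕ) : Prop :=
  diffIdeal p e (I ^ (n + 1)) < diffIdeal p e (I ^ n)

/-- A p-adic integer `x` is a Bernstein–Sato root of `I` if there is a sequence
`(ν_e)_e` with `ν_e ∈ B^•_I(p^e)` converging to `x` in `ℤ_p`. -/
def IsBSRoot (p : ℕ) [Fact p.Prime] {R : Type*} [CommRing R] (I : Ideal R)
    (x : PadicInt p) : Prop :=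
  ∃ ν : ℕ → ℕ, (∀ e : ℕ, IsJump p e I (ν e)) ∧
    Tendsto (fun e : ℕ => ((ν e : ℤ) : PadicInt p)) atTop (nhds x)

namespace BSAux

/-! ### Generalities on `diffIdeal` -/

section Basic

variable {R : Type*} [CommRing R]

/-- The defining condition for membership in `D^{(e)}`. -/
def DOp (p e : ℕ) {R : Type*} [CommRing R] (φ : R →+ R) : Prop :=
  ∀ r x : R, φ (r ^ p ^ e * x) = r ^ p ^ e * φ x

/-- The generating set of `diffIdeal`. -/
def genSet (p e : ℕ) {R : Type*} [CommRing R] (I : Ideal R) : Set R :=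
  {y : R | ∃ φ : R →+ R,
    (∀ r x : R, φ (r ^ p ^ e * x) = r ^ p ^ e * φ x) ∧ ∃ g ∈ I, φ g = y}

lemma diffIdeal_eq (p e : ℕ) (I : Ideal R) : diffIdeal p e I = Ideal.span (genSet p e I) := rfl

lemma dop_id (p e : ℕ) : DOp p e (AddMonoidHom.id R) := fun _ _ => rfl

lemma mem_diffIdeal {p e : ℕ} {I : Ideal R} {φ : R →+ R} (hφ : DOp p e φ) {g : R}
    (hg : g ∈ I) : φ g ∈ diffIdeal p e I :=
  Ideal.subset_span ⟨φ, hφ, g, hg, rfl⟩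

lemma self_le_diffIdeal {p e : ℕ} {I : Ideal R} : I ≤ diffIdeal p e I := fun x hx =>
  mem_diffIdeal (dop_id p e) hx

lemma diffIdeal_mono {p e : ℕ} {I J : Ideal R} (h : I ≤ J) :
    diffIdeal p e I ≤ diffIdeal p e J :=
  Ideal.span_mono (fun y => fun ⟨φ, hφ, g, hg, hy⟩ => ⟨φ, hφ, g, h hg, hy⟩)

/-- Induction principle: membership in `diffIdeal` reduces to finite sums of
generators `φ g`. -/
lemma diffIdeal_induction {p e : ℕ} {I : Ideal R} {motive : R → Prop} {y : R}
    (hy : y ∈ diffIdeal p e I)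
    (mem : ∀ (φ : R →+ R), DOp p e φ → ∀ g ∈ I, motive (φ g))
    (zero : motive 0)
    (add : ∀ a b, motive a → motive b → motive (a + b)) : motive y := by
  have hcl : y ∈ AddSubmonoid.closure (genSet p e I) := by
    let T : Ideal R :=
      { carrier := AddSubmonoid.closure (genSet p e I)
        add_mem' := fun ha hb => AddSubmonoid.add_mem _ ha hb
        zero_mem' := AddSubmonoid.zero_mem _
        smul_mem' := by
          intro r x hx
          simp only [smul_eq_mul]
          refine AddSubmonoid.closure_induction (fun z hz => ?_) ?_
            (fun a b _ _ ha hb => ?_) hx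
          · obtain ⟨φ, hφ, g, hg, rfl⟩ := hz
            refine AddSubmonoid.subset_closure
              ⟨(AddMonoidHom.mulLeft r).comp φ, fun c w => ?_, g, hg, rfl⟩
            show r * φ (c ^ p ^ e * w) = c ^ p ^ e * (r * φ w)
            rw [hφ, mul_left_comm]
          · rw [mul_zero]; exact AddSubmonoid.zero_mem _
          · rw [mul_add]; exact AddSubmonoid.add_mem _ ha hb }
    have hle : diffIdeal p e I ≤ T := by
      rw [diffIdeal_eq]
      exact Ideal.span_le.mpr AddSubmonoid.subset_closure
    exact hle hy
  refine AddSubmonoid.closure_induction (fun z hz => ?_) zero (fun a b _ _ => add a b) hcl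
  obtain ⟨φ, hφ, g, hg, rfl⟩ := hz
  exact mem φ hφ g hg

/-- `D^{(e+1)} · (D^{(e)} · I) = D^{(e+1)} · I`. -/
lemma diffIdeal_diffIdeal (p e : ℕ) (I : Ideal R) :
    diffIdeal p (e + 1) (diffIdeal p e I) = diffIdeal p (e + 1) I := by
  refine le_antisymm ?_ (diffIdeal_mono self_le_diffIdeal)
  rw [diffIdeal_eq p (e + 1) (diffIdeal p e I)]
  refine Ideal.span_le.mpr ?_
  rintro y ⟨Φ, hΦ, h, hh, rfl⟩
  refine diffIdeal_induction (motive := fun h => Φ h ∈ diffIdeal p (e + 1) I) hh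
    (fun ψ hψ g hg => ?_) ?_ (fun a b ha hb => ?_)
  · have hcomp : DOp p (e + 1) (Φ.comp ψ) := by
      intro r x
      have h1 : r ^ p ^ (e + 1) = (r ^ p) ^ p ^ e := by
        rw [← pow_mul, ← pow_succ']
      show Φ (ψ (r ^ p ^ (e + 1) * x)) = r ^ p ^ (e + 1) * Φ (ψ x)
      rw [h1, hψ (r ^ p) x, ← h1]
      exact hΦ r (ψ x)
    exact mem_diffIdeal hcomp hg
  · show Φ (0 : R) ∈ diffIdeal p (e + 1) I
    rw [map_zero]; exact zero_mem _
  · show Φ (a + b) ∈ diffIdeal p (e + 1) I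
    rw [map_add]; exact add_mem ha hb

lemma isJump_of_succ {p e n : ℕ} {I : Ideal R} (h : IsJump p (e + 1) I n) :
    IsJump p e I n := by
  by_contra hc
  have hle : diffIdeal p e (I ^ (n + 1)) ≤ diffIdeal p e (I ^ n) :=
    diffIdeal_mono (Ideal.pow_le_pow_right n.le_succ)
  have heq : diffIdeal p e (I ^ (n + 1)) = diffIdeal p e (I ^ n) :=
    hle.lt_or_eq.resolve_left hc
  have h2 : diffIdeal p (e + 1) (I ^ (n + 1)) = diffIdeal p (e + 1) (I ^ n) := by
    rw [← diffIdeal_diffIdeal p e (I ^ (n + 1)), heq, diffIdeal_diffIdeal]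
  have h3 : diffIdeal p (e + 1) (I ^ (n + 1)) < diffIdeal p (e + 1) (I ^ n) := h
  rw [h2] at h3
  exact lt_irrefl _ h3

lemma isJump_of_le {p n : ℕ} {I : Ideal R} {e e' : ℕ} (hee : e ≤ e')
    (h : IsJump p e' I n) : IsJump p e I n := by
  revert h
  induction e', hee using Nat.le_induction with
  | base => exact id
  | succ m hm ih => exact fun h => ih (isJump_of_succ h)

end Basic

/-! ### Projectivity and dual bases for finite flat ring maps -/

theorem flat_fp_projective {A M : Type*} [CommRing A] [AddCommGroup M] [Module A M]
    [Module.FinitePresentation A M] [Module.Flat A M] : Module.Projective A M := by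
  apply Module.projective_of_localization_maximal
  intro P hP
  haveI : Module.Flat (Localization.AtPrime P) (LocalizedModule P.primeCompl M) :=
    Module.Flat.localizedModule _
  haveI : Module.Free (Localization.AtPrime P) (LocalizedModule P.primeCompl M) :=
    Module.free_of_flat_of_isLocalRing
  infer_instance

/-- A "dual basis" for a finite flat ring map over a Noetherian base. -/
theorem exists_dualBasis {A B : Type*} [CommRing A] [CommRing B] [IsNoetherianRing A]
    (f : A →+* B) (hfin : f.Finite) (hflat : f.Flat) :
    ∃ s : B → (B →₀ A), (∀ x y : B, s (x + y) = s x + s y) ∧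
      (∀ (a : A) (x : B), s (f a * x) = a • s x) ∧
      (∀ x : B, (s x).sum (fun m c => f c * m) = x) := by
  letI := f.toAlgebra
  haveI hFin : Module.Finite A B := hfin
  haveI hFlat : Module.Flat A B := hflat
  haveI : Module.FinitePresentation A B := Module.finitePresentation_of_finite A B
  haveI hproj : Module.Projective A B := flat_fp_projective
  obtain ⟨s, hs⟩ := Module.projective_def.mp hproj
  refine ⟨fun x => s x, fun x y => map_add s x y, fun a x => ?_, fun x => ?_⟩
  · show s (f a * x) = a • s x
    have h1 : f a * x = a • x := by rw [Algebra.smul_def, RingHom.algebraMap_toAlgebra]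
    rw [h1, map_smul]
  · have h := hs x
    rw [Finsupp.linearCombination_apply] at h
    calc (s x).sum (fun m c => f c * m) = (s x).sum (fun m c => c • m) :=
          Finsupp.sum_congr (fun m _ => by rw [Algebra.smul_def, RingHom.algebraMap_toAlgebra])
      _ = x := h

/-! ### Tensor products -/

section Tensor

variable (p : ℕ) [Fact p.Prime] {R S : Type*} [CommRing R] [CommRing S]
  [CharP R p] [CharP S p]

/-- The set of pure tensors with factors in given ideals. -/
def tset (K : Ideal R) (L : Ideal S) : Set (R ⊗[ZMod p] S) :=
  {q : R ⊗[ZMod p] S | ∃ a ∈ K, ∃ b ∈ L, q = a ⊗ₜ[ZMod p] b}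

lemma tspan_induction {K : Ideal R} {L : Ideal S}
    {motive : R ⊗[ZMod p] S → Prop} {x : R ⊗[ZMod p] S}
    (hx : x ∈ Ideal.span (tset p K L))
    (mem : ∀ a ∈ K, ∀ b ∈ L, motive (a ⊗ₜ[ZMod p] b))
    (zero : motive 0)
    (add : ∀ u v, motive u → motive v → motive (u + v)) : motive x := by
  have hcl : x ∈ AddSubmonoid.closure (tset p K L) := by
    let T : Ideal (R ⊗[ZMod p] S) :=
      { carrier := AddSubmonoid.closure (tset p K L)
        add_mem' := fun ha hb => AddSubmonoid.add_mem _ ha hb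
        zero_mem' := AddSubmonoid.zero_mem _
        smul_mem' := by
          intro c x hx
          simp only [smul_eq_mul]
          refine AddSubmonoid.closure_induction (fun z hz => ?_) ?_
            (fun a b _ _ ha hb => ?_) hx
          · obtain ⟨a, ha, b, hb, rfl⟩ := hz
            -- c * (a ⊗ b) ∈ closure, by induction on c
            induction c using TensorProduct.induction_on with
            | zero => rw [zero_mul]; exact AddSubmonoid.zero_mem _
            | tmul r s =>
              rw [Algebra.TensorProduct.tmul_mul_tmul]
              exact AddSubmonoid.subset_closure
                ⟨r * a, K.mul_mem_left r ha, s * b, L.mul_mem_left s hb, rfl⟩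
            | add c₁ c₂ h₁ h₂ =>
              rw [add_mul]; exact AddSubmonoid.add_mem _ h₁ h₂
          · rw [mul_zero]; exact AddSubmonoid.zero_mem _
          · rw [mul_add]; exact AddSubmonoid.add_mem _ ha hb }
    have hle : Ideal.span (tset p K L) ≤ T := Ideal.span_le.mpr AddSubmonoid.subset_closure
    exact hle hx
  refine AddSubmonoid.closure_induction (fun z hz => ?_) zero (fun a b _ _ => add a b) hcl
  obtain ⟨a, ha, b, hb, rfl⟩ := hz
  exact mem a ha b hb

lemma nontrivial_of_charP {T : Type*} [CommRing T] [CharP T p] : Nontrivial T :=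
  CharP.nontrivial_of_char_ne_one (Fact.out : p.Prime).ne_one

lemma charP_tensor : CharP (R ⊗[ZMod p] S) p := by
  haveI : Nontrivial R := nontrivial_of_charP p
  haveI : Nontrivial S := nontrivial_of_charP p
  exact charP_of_injective_algebraMap (algebraMap (ZMod p) (R ⊗[ZMod p] S)).injective p

/-- The tensor product of two `D^{(e)}`-operators is a `D^{(e)}`-operator. -/
lemma dop_map {e : ℕ} {φ : R →+ R} {ψ : S →+ S} (hφ : DOp p e φ) (hψ : DOp p e ψ) :
    DOp p e ((TensorProduct.map (AddMonoidHom.toZModLinearMap p φ)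
      (AddMonoidHom.toZModLinearMap p ψ)).toAddMonoidHom) := by
  haveI : CharP (R ⊗[ZMod p] S) p := charP_tensor p
  haveI : ExpChar (R ⊗[ZMod p] S) p := ExpChar.prime Fact.out
  set F := TensorProduct.map (AddMonoidHom.toZModLinearMap p φ)
    (AddMonoidHom.toZModLinearMap p ψ) with hF
  have key : ∀ q x : R ⊗[ZMod p] S,
      F (iterateFrobenius (R ⊗[ZMod p] S) p e q * x)
        = iterateFrobenius (R ⊗[ZMod p] S) p e q * F x := by
    intro q
    induction q using TensorProduct.induction_on with
    | zero => intro x; rw [map_zero, zero_mul, map_zero, zero_mul]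
    | tmul r s =>
      intro x
      rw [iterateFrobenius_def, Algebra.TensorProduct.tmul_pow]
      induction x using TensorProduct.induction_on with
      | zero => rw [mul_zero, map_zero, mul_zero]
      | tmul u v =>
        rw [Algebra.TensorProduct.tmul_mul_tmul, TensorProduct.map_tmul,
          TensorProduct.map_tmul]
        show ((AddMonoidHom.toZModLinearMap p φ) (r ^ p ^ e * u)) ⊗ₜ[ZMod p]
            ((AddMonoidHom.toZModLinearMap p ψ) (s ^ p ^ e * v)) = _
        have h1 : (AddMonoidHom.toZModLinearMap p φ) (r ^ p ^ e * u)
            = r ^ p ^ e * φ u := hφ r u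
        have h2 : (AddMonoidHom.toZModLinearMap p ψ) (s ^ p ^ e * v)
            = s ^ p ^ e * ψ v := hψ s v
        rw [h1, h2, ← Algebra.TensorProduct.tmul_mul_tmul]
        rfl
      | add x y hx hy => rw [mul_add, map_add, hx, hy, map_add, mul_add]
    | add q₁ q₂ h₁ h₂ =>
      intro x
      rw [map_add, add_mul, map_add, h₁, h₂, add_mul]
  intro r x
  have h := key r x
  rwa [iterateFrobenius_def] at h

/-- `𝔅^m` is spanned by pure tensors from `I^m` and `J^m`. -/
lemma span_tset_pow (I : Ideal R) (J : Ideal S) (m : ℕ) :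
    (Ideal.span (tset p I J)) ^ m = Ideal.span (tset p (I ^ m) (J ^ m)) := by
  induction m with
  | zero =>
    have h1 : (1 : R ⊗[ZMod p] S) ∈ Ideal.span (tset p (⊤ : Ideal R) (⊤ : Ideal S)) :=
      Ideal.subset_span ⟨1, trivial, 1, trivial, Algebra.TensorProduct.one_def⟩
    rw [pow_zero, pow_zero, pow_zero, Ideal.one_eq_top, Ideal.one_eq_top, Ideal.one_eq_top]
    exact ((Ideal.eq_top_iff_one _).mpr h1).symm
  | succ m ih =>
    rw [pow_succ, ih]
    refine le_antisymm ?_ ?_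
    · rw [Ideal.span_mul_span]
      refine Ideal.span_le.mpr ?_
      intro x hx
      rw [Set.mem_mul] at hx
      obtain ⟨u, ⟨a, ha, b, hb, rfl⟩, v, ⟨c, hc, d, hd, rfl⟩, rfl⟩ := hx
      rw [Algebra.TensorProduct.tmul_mul_tmul]
      refine Ideal.subset_span ⟨a * c, ?_, b * d, ?_, rfl⟩
      · rw [pow_succ]; exact Ideal.mul_mem_mul ha hc
      · rw [pow_succ]; exact Ideal.mul_mem_mul hb hd
    · refine Ideal.span_le.mpr ?_
      rintro x ⟨a, ha, b, hb, rfl⟩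
      rw [pow_succ] at ha hb
      refine Submodule.mul_induction_on ha
        (fun f hf g hg => ?_) (fun x y hx hy => ?_) b hb
      · -- motive: ∀ b ∈ J^m * J, (f*g) ⊗ b ∈ span * span
        clear hb b
        intro b hb
        refine Submodule.mul_induction_on hb (fun u hu v hv => ?_) (fun x y hx hy => ?_)
        · rw [← Algebra.TensorProduct.tmul_mul_tmul]
          exact Ideal.mul_mem_mul (Ideal.subset_span ⟨f, hf, u, hu, rfl⟩)
            (Ideal.subset_span ⟨g, hg, v, hv, rfl⟩)
        · rw [TensorProduct.tmul_add]; exact add_mem hx hy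
      · clear hb b
        intro b hb
        rw [TensorProduct.add_tmul]; exact add_mem (hx b hb) (hy b hb)

/-- The key upper bound: `D^{(e)}` of a tensor-span is contained in the span of
tensors of `D^{(e)}`-ideals.  Uses the dual basis for the Frobenius. -/
lemma diff_tensor_le (e : ℕ) [IsNoetherianRing R] [IsNoetherianRing S]
    (hRfin : (iterateFrobenius R p e).Finite) (hRflat : (iterateFrobenius R p e).Flat)
    (hSfin : (iterateFrobenius S p e).Finite) (hSflat : (iterateFrobenius S p e).Flat)
    (K : Ideal R) (L : Ideal S) :
    diffIdeal p e (Ideal.span (tset p K L))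
      ≤ Ideal.span (tset p (diffIdeal p e K) (diffIdeal p e L)) := by
  haveI : ExpChar R p := ExpChar.prime Fact.out
  haveI : ExpChar S p := ExpChar.prime Fact.out
  obtain ⟨sR, hRadd, hRsemi, hRsum⟩ := exists_dualBasis (iterateFrobenius R p e) hRfin hRflat
  obtain ⟨sS, hSadd, hSsemi, hSsum⟩ := exists_dualBasis (iterateFrobenius S p e) hSfin hSflat
  rw [diffIdeal_eq]
  refine Ideal.span_le.mpr ?_
  rintro y ⟨Φ, hΦ, h, hh, rfl⟩
  refine tspan_induction p
    (motive := fun h => Φ h ∈ Ideal.span (tset p (diffIdeal p e K) (diffIdeal p e L)))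
    hh (fun a ha b hb => ?_)
    (by show Φ (0 : R ⊗[ZMod p] S) ∈ _; rw [map_zero]; exact zero_mem _)
    (fun u v hu hv => by
      show Φ (u + v) ∈ _
      rw [map_add]; exact add_mem hu hv)
  show Φ (a ⊗ₜ[ZMod p] b) ∈ Ideal.span (tset p (diffIdeal p e K) (diffIdeal p e L))
  -- core computation
  have ha' : a = ∑ w ∈ (sR a).support, (sR a w) ^ p ^ e * w := by
    conv_lhs => rw [← hRsum a]
    rw [Finsupp.sum]
    exact Finset.sum_congr rfl fun w _ => by rw [iterateFrobenius_def]
  have hb' : b = ∑ w ∈ (sS b).support, (sS b w) ^ p ^ e * w := by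
    conv_lhs => rw [← hSsum b]
    rw [Finsupp.sum]
    exact Finset.sum_congr rfl fun w _ => by rw [iterateFrobenius_def]
  have key : a ⊗ₜ[ZMod p] b = ∑ w₁ ∈ (sR a).support, ∑ w₂ ∈ (sS b).support,
      ((sR a w₁) ^ p ^ e * w₁) ⊗ₜ[ZMod p] ((sS b w₂) ^ p ^ e * w₂) := by
    conv_lhs => rw [ha', hb']
    rw [TensorProduct.sum_tmul]
    exact Finset.sum_congr rfl fun w₁ _ => TensorProduct.tmul_sum _ _ _
  rw [key, map_sum]
  refine Ideal.sum_mem _ fun w₁ _ => ?_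
  rw [map_sum]
  refine Ideal.sum_mem _ fun w₂ _ => ?_
  have hterm : ((sR a w₁) ^ p ^ e * w₁) ⊗ₜ[ZMod p] ((sS b w₂) ^ p ^ e * w₂)
      = ((sR a w₁) ⊗ₜ[ZMod p] (sS b w₂)) ^ p ^ e * (w₁ ⊗ₜ[ZMod p] w₂) := by
    rw [Algebra.TensorProduct.tmul_pow, Algebra.TensorProduct.tmul_mul_tmul]
  rw [hterm, hΦ, Algebra.TensorProduct.tmul_pow]
  refine Ideal.mul_mem_right _ _ (Ideal.subset_span ⟨_, ?_, _, ?_, rfl⟩)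
  · -- (sR a w₁)^{p^e} ∈ diffIdeal p e K
    have hdop : DOp p e (AddMonoidHom.mk' (fun x => (sR x w₁) ^ p ^ e)
        (fun x y => by
          show (sR (x + y) w₁) ^ p ^ e = (sR x w₁) ^ p ^ e + (sR y w₁) ^ p ^ e
          rw [hRadd, Finsupp.add_apply, add_pow_char_pow])) := by
      intro r x
      show (sR (r ^ p ^ e * x) w₁) ^ p ^ e = r ^ p ^ e * (sR x w₁) ^ p ^ e
      have h1 : r ^ p ^ e * x = iterateFrobenius R p e r * x := by rw [iterateFrobenius_def]
      rw [h1, hRsemi, Finsupp.smul_apply, smul_eq_mul, mul_pow]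
    exact mem_diffIdeal hdop ha
  · have hdop : DOp p e (AddMonoidHom.mk' (fun x => (sS x w₂) ^ p ^ e)
        (fun x y => by
          show (sS (x + y) w₂) ^ p ^ e = (sS x w₂) ^ p ^ e + (sS y w₂) ^ p ^ e
          rw [hSadd, Finsupp.add_apply, add_pow_char_pow])) := by
      intro r x
      show (sS (r ^ p ^ e * x) w₂) ^ p ^ e = r ^ p ^ e * (sS x w₂) ^ p ^ e
      have h1 : r ^ p ^ e * x = iterateFrobenius S p e r * x := by rw [iterateFrobenius_def]
      rw [h1, hSsemi, Finsupp.smul_apply, smul_eq_mul, mul_pow]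
    exact mem_diffIdeal hdop hb

/-- The lower bound: tensors of `D^{(e)}`-ideals lie in `D^{(e)}` of the tensor-span. -/
lemma tensor_le_diff (e : ℕ) (K : Ideal R) (L : Ideal S) :
    Ideal.span (tset p (diffIdeal p e K) (diffIdeal p e L))
      ≤ diffIdeal p e (Ideal.span (tset p K L)) := by
  refine Ideal.span_le.mpr ?_
  rintro q ⟨a, ha, b, hb, rfl⟩
  refine diffIdeal_induction
    (motive := fun a => ∀ b' ∈ diffIdeal p e L,
      a ⊗ₜ[ZMod p] b' ∈ diffIdeal p e (Ideal.span (tset p K L)))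
    ha ?_ ?_ ?_ b hb
  · rintro φ hφ g hg b' hb'
    refine diffIdeal_induction
      (motive := fun b' => (φ g) ⊗ₜ[ZMod p] b' ∈ diffIdeal p e (Ideal.span (tset p K L)))
      hb' (fun ψ hψ h hh => ?_) ?_ (fun x y hx hy => ?_)
    · show (φ g) ⊗ₜ[ZMod p] (ψ h) ∈ diffIdeal p e (Ideal.span (tset p K L))
      have hmem : g ⊗ₜ[ZMod p] h ∈ Ideal.span (tset p K L) :=
        Ideal.subset_span ⟨g, hg, h, hh, rfl⟩
      have hres := mem_diffIdeal (dop_map p hφ hψ) hmem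
      have heq : (TensorProduct.map (AddMonoidHom.toZModLinearMap p φ)
          (AddMonoidHom.toZModLinearMap p ψ)).toAddMonoidHom (g ⊗ₜ[ZMod p] h)
          = (φ g) ⊗ₜ[ZMod p] (ψ h) := by
        show (TensorProduct.map (AddMonoidHom.toZModLinearMap p φ)
          (AddMonoidHom.toZModLinearMap p ψ)) (g ⊗ₜ[ZMod p] h) = _
        rw [TensorProduct.map_tmul]; rfl
      rwa [heq] at hres
    · show (φ g) ⊗ₜ[ZMod p] (0 : S) ∈ diffIdeal p e (Ideal.span (tset p K L))
      rw [TensorProduct.tmul_zero]; exact zero_mem _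
    · show (φ g) ⊗ₜ[ZMod p] (x + y) ∈ diffIdeal p e (Ideal.span (tset p K L))
      rw [TensorProduct.tmul_add]; exact add_mem hx hy
  · intro b' _
    show (0 : R) ⊗ₜ[ZMod p] b' ∈ diffIdeal p e (Ideal.span (tset p K L))
    rw [TensorProduct.zero_tmul]; exact zero_mem _
  · intro a₁ a₂ h₁ h₂ b' hb'
    show (a₁ + a₂) ⊗ₜ[ZMod p] b' ∈ diffIdeal p e (Ideal.span (tset p K L))
    rw [TensorProduct.add_tmul]; exact add_mem (h₁ b' hb') (h₂ b' hb')

/-! ### Separation by linear functionals -/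

lemma exists_functional {k V : Type*} [Field k] [AddCommGroup V] [Module k V]
    {W : Submodule k V} {v : V} (hv : v ∉ W) :
    ∃ f : V →ₗ[k] k, f v = 1 ∧ ∀ w ∈ W, f w = 0 := by
  have h0 : W.mkQ v ≠ 0 := by
    rw [Submodule.mkQ_apply]
    simpa [Submodule.Quotient.mk_eq_zero] using hv
  obtain ⟨g, hg⟩ : ∃ g : Module.Dual k (V ⧸ W), g (W.mkQ v) ≠ 0 := by
    by_contra hcon
    push_neg at hcon
    exact h0 ((Module.forall_dual_apply_eq_zero_iff k _).mp hcon)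
  refine ⟨(g (W.mkQ v))⁻¹ • (g ∘ₗ W.mkQ), ?_, fun w hw => ?_⟩
  · simp only [LinearMap.smul_apply, LinearMap.comp_apply, smul_eq_mul]
    exact inv_mul_cancel₀ hg
  · have hz : W.mkQ w = 0 := by
      rw [Submodule.mkQ_apply]
      exact (Submodule.Quotient.mk_eq_zero W).mpr hw
    simp [hz]

lemma not_mem_tspan_left {K' : Ideal R} {L' : Ideal S} {a : R} {b : S}
    (ha : a ∉ K') (hb : b ≠ 0) :
    a ⊗ₜ[ZMod p] b ∉ Ideal.span (tset p K' L') := by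
  have ha' : a ∉ Submodule.restrictScalars (ZMod p) K' := ha
  obtain ⟨lam, hl1, hl0⟩ := exists_functional (k := ZMod p) ha'
  set Λ : R ⊗[ZMod p] S →ₗ[ZMod p] S :=
    (TensorProduct.lid (ZMod p) S).toLinearMap ∘ₗ TensorProduct.map lam LinearMap.id with hΛ
  intro hmem
  have hz : ∀ x ∈ Ideal.span (tset p K' L'), Λ x = 0 := by
    intro x hx
    refine tspan_induction p (motive := fun x => Λ x = 0) hx (fun a' ha' b' hb' => ?_)
      (map_zero _) (fun u v hu hv => by
        show Λ (u + v) = 0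
        rw [map_add, hu, hv, add_zero])
    show Λ (a' ⊗ₜ[ZMod p] b') = 0
    have : Λ (a' ⊗ₜ[ZMod p] b') = lam a' • b' := by
      rw [hΛ]
      simp [TensorProduct.map_tmul, TensorProduct.lid_tmul]
    rw [this, hl0 a' ha', zero_smul]
  have hzz := hz _ hmem
  have : Λ (a ⊗ₜ[ZMod p] b) = b := by
    rw [hΛ]
    simp [TensorProduct.map_tmul, TensorProduct.lid_tmul, hl1]
  rw [this] at hzz
  exact hb hzz

lemma not_mem_tspan_right {K' : Ideal R} {L' : Ideal S} {a : R} {b : S}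
    (ha : a ≠ 0) (hb : b ∉ L') :
    a ⊗ₜ[ZMod p] b ∉ Ideal.span (tset p K' L') := by
  have hb' : b ∉ Submodule.restrictScalars (ZMod p) L' := hb
  obtain ⟨lam, hl1, hl0⟩ := exists_functional (k := ZMod p) hb'
  set Λ : R ⊗[ZMod p] S →ₗ[ZMod p] R :=
    (TensorProduct.rid (ZMod p) R).toLinearMap ∘ₗ TensorProduct.map LinearMap.id lam with hΛ
  intro hmem
  have hz : ∀ x ∈ Ideal.span (tset p K' L'), Λ x = 0 := by
    intro x hx
    refine tspan_induction p (motive := fun x => Λ x = 0) hx (fun a' ha' b' hb' => ?_)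
      (map_zero _) (fun u v hu hv => by
        show Λ (u + v) = 0
        rw [map_add, hu, hv, add_zero])
    show Λ (a' ⊗ₜ[ZMod p] b') = 0
    have : Λ (a' ⊗ₜ[ZMod p] b') = lam b' • a' := by
      rw [hΛ]
      simp [TensorProduct.map_tmul, TensorProduct.rid_tmul]
    rw [this, hl0 b' hb', zero_smul]
  have hzz := hz _ hmem
  have : Λ (a ⊗ₜ[ZMod p] b) = a := by
    rw [hΛ]
    simp [TensorProduct.map_tmul, TensorProduct.rid_tmul, hl1]
  rw [this] at hzz
  exact ha hzz

end Tensor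

end BSAux

/-- Let `R` and `S` be Noetherian commutative rings of prime
characteristic `p` which are F-finite and regular, i.e. for every `e` the `e`-th
iterated Frobenius is a finite flat ring map. Let `I ⊆ R`, `J ⊆ S` be ideals not
contained in the respective nilradicals, `Q = R ⊗_{𝔽_p} S`, and
`𝔅 = ⟨{f ⊗ g : f ∈ I, g ∈ J}⟩`. Then `BSR(𝔅) = BSR(I) ∪ BSR(J)`. -/
theorem bsRoot_union_tensor (p : ℕ) [Fact p.Prime]
    (R S : Type*) [CommRing R] [CommRing S] [CharP R p] [CharP S p]
    [IsNoetherianRing R] [IsNoetherianRing S]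
    (hRfin : ∀ e : ℕ, (iterateFrobenius R p e).Finite)
    (hRflat : ∀ e : ℕ, (iterateFrobenius R p e).Flat)
    (hSfin : ∀ e : ℕ, (iterateFrobenius S p e).Finite)
    (hSflat : ∀ e : ℕ, (iterateFrobenius S p e).Flat)
    (I : Ideal R) (J : Ideal S)
    (hI : ¬ I ≤ nilradical R) (hJ : ¬ J ≤ nilradical S)
    (𝔅 : Ideal (R ⊗[ZMod p] S))
    (h𝔅 : 𝔅 = Ideal.span
      {q : R ⊗[ZMod p] S | ∃ f ∈ I, ∃ g ∈ J, q = f ⊗ₜ[ZMod p] g}) :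
    ∀ z : PadicInt p,
      IsBSRoot p 𝔅 z ↔ (IsBSRoot p I z ∨ IsBSRoot p J z) := by
  classical
  haveI : Nontrivial R := BSAux.nontrivial_of_charP p
  haveI : Nontrivial S := BSAux.nontrivial_of_charP p
  -- nonzero powers of non-nilpotent elements
  obtain ⟨f₀, hf₀I, hf₀n⟩ : ∃ x ∈ I, x ∉ nilradical R := by
    by_contra hcon
    push_neg at hcon
    exact hI hcon
  obtain ⟨g₀, hg₀J, hg₀n⟩ : ∃ x ∈ J, x ∉ nilradical S := by
    by_contra hcon
    push_neg at hcon
    exact hJ hcon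
  have hfpow : ∀ m : ℕ, f₀ ^ m ≠ 0 := by
    intro m h0
    rcases Nat.eq_zero_or_pos m with hm | hm
    · rw [hm, pow_zero] at h0; exact one_ne_zero h0
    · exact hf₀n (mem_nilradical.mpr ⟨m, h0⟩)
  have hgpow : ∀ m : ℕ, g₀ ^ m ≠ 0 := by
    intro m h0
    rcases Nat.eq_zero_or_pos m with hm | hm
    · rw [hm, pow_zero] at h0; exact one_ne_zero h0
    · exact hg₀n (mem_nilradical.mpr ⟨m, h0⟩)
  -- 𝔅 is the span of the tensor set
  have h𝔅' : 𝔅 = Ideal.span (BSAux.tset p I J) := h𝔅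
  have hpow : ∀ m : ℕ, 𝔅 ^ m = Ideal.span (BSAux.tset p (I ^ m) (J ^ m)) := by
    intro m
    rw [h𝔅']
    exact BSAux.span_tset_pow p I J m
  -- level-wise characterization of jumps
  have jump_iff : ∀ e n : ℕ, IsJump p e 𝔅 n ↔ (IsJump p e I n ∨ IsJump p e J n) := by
    intro e n
    have hD : ∀ m : ℕ, diffIdeal p e (𝔅 ^ m)
        ≤ Ideal.span (BSAux.tset p (diffIdeal p e (I ^ m)) (diffIdeal p e (J ^ m))) := by
      intro m
      rw [hpow m]
      exact BSAux.diff_tensor_le p e (hRfin e) (hRflat e) (hSfin e) (hSflat e) _ _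
    have hD' : ∀ m : ℕ,
        Ideal.span (BSAux.tset p (diffIdeal p e (I ^ m)) (diffIdeal p e (J ^ m)))
          ≤ diffIdeal p e (𝔅 ^ m) := by
      intro m
      rw [hpow m]
      exact BSAux.tensor_le_diff p e _ _
    constructor
    · intro hQ
      by_contra hcon
      push_neg at hcon
      obtain ⟨hnI, hnJ⟩ := hcon
      have eI : diffIdeal p e (I ^ (n + 1)) = diffIdeal p e (I ^ n) :=
        (BSAux.diffIdeal_mono (Ideal.pow_le_pow_right n.le_succ)).lt_or_eq.resolve_left hnI
      have eJ : diffIdeal p e (J ^ (n + 1)) = diffIdeal p e (J ^ n) :=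
        (BSAux.diffIdeal_mono (Ideal.pow_le_pow_right n.le_succ)).lt_or_eq.resolve_left hnJ
      have heq : diffIdeal p e (𝔅 ^ (n + 1)) = diffIdeal p e (𝔅 ^ n) := by
        refine le_antisymm ?_ ?_
        · exact BSAux.diffIdeal_mono (Ideal.pow_le_pow_right n.le_succ)
        · refine le_trans (hD n) ?_
          rw [← eI, ← eJ]
          exact hD' (n + 1)
      have hQ' : diffIdeal p e (𝔅 ^ (n + 1)) < diffIdeal p e (𝔅 ^ n) := hQ
      rw [heq] at hQ'
      exact lt_irrefl _ hQ'
    · intro h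
      have hle : diffIdeal p e (𝔅 ^ (n + 1)) ≤ diffIdeal p e (𝔅 ^ n) :=
        BSAux.diffIdeal_mono (Ideal.pow_le_pow_right n.le_succ)
      rcases h with hI' | hJ'
      · obtain ⟨a, haN, haN1⟩ := SetLike.exists_of_lt hI'
        have hbB : g₀ ^ n ∈ diffIdeal p e (J ^ n) :=
          BSAux.self_le_diffIdeal (Ideal.pow_mem_pow hg₀J n)
        have hmem : a ⊗ₜ[ZMod p] (g₀ ^ n) ∈ diffIdeal p e (𝔅 ^ n) :=
          hD' n (Ideal.subset_span ⟨a, haN, g₀ ^ n, hbB, rfl⟩)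
        have hnot : a ⊗ₜ[ZMod p] (g₀ ^ n) ∉ diffIdeal p e (𝔅 ^ (n + 1)) := fun hcon =>
          BSAux.not_mem_tspan_left p haN1 (hgpow n) (hD (n + 1) hcon)
        exact lt_of_le_of_ne hle (fun heq => hnot (by rw [heq]; exact hmem))
      · obtain ⟨b, hbN, hbN1⟩ := SetLike.exists_of_lt hJ'
        have haA : f₀ ^ n ∈ diffIdeal p e (I ^ n) :=
          BSAux.self_le_diffIdeal (Ideal.pow_mem_pow hf₀I n)
        have hmem : (f₀ ^ n) ⊗ₜ[ZMod p] b ∈ diffIdeal p e (𝔅 ^ n) :=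
          hD' n (Ideal.subset_span ⟨f₀ ^ n, haA, b, hbN, rfl⟩)
        have hnot : (f₀ ^ n) ⊗ₜ[ZMod p] b ∉ diffIdeal p e (𝔅 ^ (n + 1)) := fun hcon =>
          BSAux.not_mem_tspan_right p (hfpow n) hbN1 (hD (n + 1) hcon)
        exact lt_of_le_of_ne hle (fun heq => hnot (by rw [heq]; exact hmem))
  intro z
  constructor
  · rintro ⟨ν, hjump, hconv⟩
    have key : ∀ e : ℕ, IsJump p e I (ν e) ∨ IsJump p e J (ν e) := fun e =>
      (jump_iff e (ν e)).mp (hjump e)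
    by_cases hinf : {e : ℕ | IsJump p e I (ν e)}.Infinite
    · left
      have hσ : ∀ e : ℕ, ∃ b ∈ {e : ℕ | IsJump p e I (ν e)}, e < b := fun e =>
        hinf.exists_gt e
      choose σ hσmem hσlt using hσ
      have hσtend : Tendsto σ atTop atTop :=
        Filter.tendsto_atTop_mono (fun e => (hσlt e).le) tendsto_id
      refine ⟨fun e => ν (σ e), fun e => ?_, ?_⟩
      · exact BSAux.isJump_of_le (hσlt e).le (hσmem e)
      · exact hconv.comp hσtend
    · right
      have hfin : {e : ℕ | IsJump p e I (ν e)}.Finite := Set.not_infinite.mp hinf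
      have hinf' : {e : ℕ | IsJump p e I (ν e)}ᶜ.Infinite := hfin.infinite_compl
      have hσ : ∀ e : ℕ, ∃ b ∈ {e : ℕ | IsJump p e I (ν e)}ᶜ, e < b := fun e =>
        hinf'.exists_gt e
      choose σ hσmem hσlt using hσ
      have hσtend : Tendsto σ atTop atTop :=
        Filter.tendsto_atTop_mono (fun e => (hσlt e).le) tendsto_id
      refine ⟨fun e => ν (σ e), fun e => ?_, ?_⟩
      · have hJjump : IsJump p (σ e) J (ν (σ e)) := (key (σ e)).resolve_left (hσmem e)
        exact BSAux.isJump_of_le (hσlt e).le hJjump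
      · exact hconv.comp hσtend
  · rintro (⟨ν, hjump, hconv⟩ | ⟨ν, hjump, hconv⟩)
    · exact ⟨ν, fun e => (jump_iff e (ν e)).mpr (Or.inl (hjump e)), hconv⟩
    · exact ⟨ν, fun e => (jump_iff e (ν e)).mpr (Or.inr (hjump e)), hconv⟩
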